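/- arXiv:1810.02144 — 3 statements merged into one kernel-verified Lean document; each statement's English description precedes it below -/
import Mathlib

section
/- If the induced non-autonomous system on the space of Borel probability measures M(X) (with the weak* topology, induced maps given by pushforward) is topologically transitive, then the base non-autonomous system (X, f_{1,∞}) satisfies Banks's condition: for any three non-empty open subsets U, V, W of X there exists n ∈ ℕ such that f_1^n(U) ∩ V ≠ ∅ and f_1^n(U) ∩ W ≠ ∅. -/
open Set Filter MeasureTheory TopologicalSpace

/-- `iterN f n = f_{n-1} ∘ ⋯ ∘ f_0`, the `n`-th iterate of the non-autonomous system. -/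
def iterN {X : Type*} (f : ℕ → X → X) : ℕ → X → X
  | 0 => id
  | n + 1 => f n ∘ iterN f n

/-- Topological transitivity of a non-autonomous system. -/
def NATransitive {X : Type*} [TopologicalSpace X] (f : ℕ → X → X) : Prop :=
  ∀ U V : Set X, IsOpen U → IsOpen V → U.Nonempty → V.Nonempty →
    ∃ n : ℕ, 0 < n ∧ (iterN f n '' U ∩ V).Nonempty

/-- Weak mixing (order 2). -/
def NAWeaklyMixing {X : Type*} [TopologicalSpace X] (f : ℕ → X → X) : Prop :=
  ∀ U₁ U₂ V₁ V₂ : Set X, IsOpen U₁ → IsOpen U₂ → IsOpen V₁ → IsOpen V₂ →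
    U₁.Nonempty → U₂.Nonempty → V₁.Nonempty → V₂.Nonempty →
    ∃ n : ℕ, 0 < n ∧ (iterN f n '' U₁ ∩ V₁).Nonempty ∧ (iterN f n '' U₂ ∩ V₂).Nonempty

/-- Weak mixing of order `m`. -/
def NAWeaklyMixingOrder {X : Type*} [TopologicalSpace X] (f : ℕ → X → X) (m : ℕ) : Prop :=
  ∀ U V : Fin m → Set X, (∀ i, IsOpen (U i)) → (∀ i, IsOpen (V i)) →
    (∀ i, (U i).Nonempty) → (∀ i, (V i).Nonempty) →
    ∃ n : ℕ, 0 < n ∧ ∀ i, (iterN f n '' U i ∩ V i).Nonempty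

/-- Banks's condition. -/
def NABanks {X : Type*} [TopologicalSpace X] (f : ℕ → X → X) : Prop :=
  ∀ U V W : Set X, IsOpen U → IsOpen V → IsOpen W →
    U.Nonempty → V.Nonempty → W.Nonempty →
    ∃ n : ℕ, 0 < n ∧ (iterN f n '' U ∩ V).Nonempty ∧ (iterN f n '' U ∩ W).Nonempty

/-- Topological mixing. -/
def NAMixing {X : Type*} [TopologicalSpace X] (f : ℕ → X → X) : Prop :=
  ∀ U V : Set X, IsOpen U → IsOpen V → U.Nonempty → V.Nonempty →
    ∃ N : ℕ, ∀ n ≥ N, (iterN f n '' U ∩ V).Nonempty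

/-- `blockC f s k = f_{s+k-1} ∘ ⋯ ∘ f_s`. -/
def blockC {X : Type*} (f : ℕ → X → X) (s k : ℕ) : X → X :=
  iterN (fun i => f (s + i)) k

/-- The `k`-th iterate system `f_{1,∞}^{[k]}`. -/
def kthSys {X : Type*} (f : ℕ → X → X) (k : ℕ) : ℕ → X → X :=
  fun n => blockC f (n * k) k

/-- The induced non-autonomous system on Borel probability measures (pushforwards). -/
noncomputable def inducedM {X : Type*} [MeasurableSpace X] [TopologicalSpace X]
    [BorelSpace X] (f : ℕ → X → X) (hf : ∀ n, Continuous (f n)) :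
    ℕ → ProbabilityMeasure X → ProbabilityMeasure X :=
  fun n μ => μ.map ((hf n).measurable.aemeasurable)

/-- The induced non-autonomous system on the hyperspace of non-empty compact subsets. -/
def inducedK {X : Type*} [TopologicalSpace X] (f : ℕ → X → X) (hf : ∀ n, Continuous (f n)) :
    ℕ → NonemptyCompacts X → NonemptyCompacts X :=
  fun n K => ⟨⟨f n '' (K : Set X), K.isCompact.image (hf n)⟩, K.nonempty.image _⟩

/-- The set `N(U, δ)` of sensitivity times. -/
def NSet {X : Type*} [PseudoMetricSpace X] (f : ℕ → X → X) (U : Set X) (δ : ℝ) : Set ℕ :=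
  {n | 0 < n ∧ ∃ x ∈ U, ∃ y ∈ U, δ < dist (iterN f n x) (iterN f n y)}

/-- Sensitive dependence on initial conditions. -/
def NASensitive {X : Type*} [PseudoMetricSpace X] (f : ℕ → X → X) : Prop :=
  ∃ δ : ℝ, 0 < δ ∧ ∀ x : X, ∀ U : Set X, IsOpen U → x ∈ U →
    ∃ y ∈ U, ∃ n : ℕ, 0 < n ∧ δ < dist (iterN f n x) (iterN f n y)

/-- A thick subset of ℕ. -/
def ThickSet (S : Set ℕ) : Prop := ∀ p : ℕ, ∃ n : ℕ, ∀ j ≤ p, n + j ∈ S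

/-- A syndetic subset of ℕ. -/
def SyndeticSet (S : Set ℕ) : Prop := ∃ a : ℕ, ∀ i : ℕ, ∃ j, i ≤ j ∧ j ≤ i + a ∧ j ∈ S

/-- Upper density of a subset of ℕ. -/
noncomputable def upperDens (S : Set ℕ) : ℝ :=
  Filter.limsup (fun n : ℕ => (Nat.card ↥(S ∩ Set.Iio n) : ℝ) / n) Filter.atTop

/-- Periodic point of a non-autonomous system. -/
def NAPeriodicPt {X : Type*} (f : ℕ → X → X) (x : X) : Prop :=
  ∃ n : ℕ, 0 < n ∧ ∀ k : ℕ, 0 < k → iterN f (n * k) x = x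

open scoped ENNReal Topology

lemma iterN_cont {X : Type*} [TopologicalSpace X] (f : ℕ → X → X)
    (hf : ∀ n, Continuous (f n)) : ∀ n, Continuous (iterN f n) := by
  intro n; induction n with
  | zero => exact continuous_id
  | succ n ih => exact (hf n).comp ih

lemma iterN_inducedM {X : Type*} [MetricSpace X] [MeasurableSpace X] [BorelSpace X]
    (f : ℕ → X → X) (hf : ∀ n, Continuous (f n)) (n : ℕ) (μ : ProbabilityMeasure X) :
    (iterN (inducedM f hf) n μ).toMeasure = (μ : Measure X).map (iterN f n) := by
  induction n with
  | zero => simp [iterN, Measure.map_id]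
  | succ n ih =>
      show ((inducedM f hf n (iterN (inducedM f hf) n μ)) : Measure X) = _
      rw [inducedM, ProbabilityMeasure.toMeasure_map, ih,
        Measure.map_map (hf n).measurable (iterN_cont f hf n).measurable]
      rfl

lemma isOpen_measGt {X : Type*} [MetricSpace X] [MeasurableSpace X] [BorelSpace X]
    (c : ℝ≥0∞) {G : Set X} (hG : IsOpen G) :
    IsOpen {μ : ProbabilityMeasure X | c < (μ : Measure X) G} := by
  rw [isOpen_iff_mem_nhds]
  intro μ hμ
  have hlim := ProbabilityMeasure.le_liminf_measure_open_of_tendsto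
    (μs := id) (tendsto_id (x := 𝓝 μ)) hG
  exact Filter.eventually_lt_of_lt_liminf (lt_of_lt_of_le hμ hlim)

/-- transitivity of the induced system on probability measures implies
Banks's condition for the base non-autonomous system. -/
theorem measure_transitive_implies_banks {X : Type*} [MetricSpace X] [CompactSpace X]
    [MeasurableSpace X] [BorelSpace X] (f : ℕ → X → X) (hf : ∀ n, Continuous (f n))
    (h : NATransitive (inducedM f hf)) : NABanks f := by
  intro U V W hU hV hW ⟨u, hu⟩ ⟨v, hv⟩ ⟨w, hw⟩
  set 𝒰 : Set (ProbabilityMeasure X) := {μ | (3/4 : ℝ≥0∞) < (μ : Measure X) U} with h𝒰def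
  set 𝒱 : Set (ProbabilityMeasure X) :=
    {μ | (1/3 : ℝ≥0∞) < (μ : Measure X) V} ∩ {μ | (1/3 : ℝ≥0∞) < (μ : Measure X) W} with h𝒱def
  have h𝒰 : IsOpen 𝒰 := isOpen_measGt _ hU
  have h𝒱 : IsOpen 𝒱 := (isOpen_measGt _ hV).inter (isOpen_measGt _ hW)
  have hδu : (⟨Measure.dirac u, inferInstance⟩ : ProbabilityMeasure X) ∈ 𝒰 := by
    show (3/4 : ℝ≥0∞) < (Measure.dirac u) U
    rw [Measure.dirac_apply' _ hU.measurableSet, Set.indicator_of_mem hu]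
    show (3/4 : ℝ≥0∞) < 1
    rw [ENNReal.div_lt_iff (by norm_num) (by norm_num)]; norm_num
  have hnuP : IsProbabilityMeasure ((2 : ℝ≥0∞)⁻¹ • (Measure.dirac v + Measure.dirac w)) := by
    constructor
    simp only [Measure.smul_apply, Measure.add_apply, Measure.dirac_apply' _ MeasurableSet.univ,
      Set.indicator_of_mem (Set.mem_univ _), smul_eq_mul, Pi.one_apply]
    rw [one_add_one_eq_two, ENNReal.inv_mul_cancel two_ne_zero ENNReal.ofNat_ne_top]
  set ν : ProbabilityMeasure X := ⟨_, hnuP⟩ with hνdef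
  have hνmem : ν ∈ 𝒱 := by
    constructor <;>
    · simp only [Set.mem_setOf_eq]
      rw [show (ν : Measure X) = (2 : ℝ≥0∞)⁻¹ • (Measure.dirac v + Measure.dirac w) from rfl]
      simp only [Measure.smul_apply, Measure.add_apply, smul_eq_mul]
      first
      | rw [Measure.dirac_apply' v hV.measurableSet, Set.indicator_of_mem hv]
      | rw [Measure.dirac_apply' w hW.measurableSet, Set.indicator_of_mem hw]
      refine lt_of_lt_of_le (show (1/3 : ℝ≥0∞) < 2⁻¹ * 1 by
        rw [mul_one, one_div, ENNReal.inv_lt_inv]; norm_num) ?_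
      gcongr
      simp
  obtain ⟨n, hn, ρ, ⟨μ, hμ𝒰, hρeq⟩, hρ𝒱⟩ :=
    h 𝒰 𝒱 h𝒰 h𝒱 ⟨_, hδu⟩ ⟨ν, hνmem⟩
  have hμU : (3/4 : ℝ≥0∞) < (μ : Measure X) U := hμ𝒰
  have hmap : (ρ : Measure X) = (μ : Measure X).map (iterN f n) := by
    rw [← hρeq]; exact iterN_inducedM f hf n μ
  have key : ∀ {A : Set X}, IsOpen A →
      (1/3 : ℝ≥0∞) < (ρ : Measure X) A → (iterN f n '' U ∩ A).Nonempty := by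
    intro A hA hlt
    rw [hmap, Measure.map_apply (iterN_cont f hf n).measurable hA.measurableSet] at hlt
    have hne : (μ : Measure X) (U ∩ (iterN f n) ⁻¹' A) ≠ 0 := by
      intro h0
      have heq := measure_union_add_inter (μ := (μ : Measure X)) U
        ((iterN_cont f hf n).measurable hA.measurableSet)
      rw [h0, add_zero] at heq
      have h1 : (μ : Measure X) (U ∪ (iterN f n) ⁻¹' A) ≤ 1 := prob_le_one
      have h2 : (1 : ℝ≥0∞) < (μ : Measure X) U + (μ : Measure X) ((iterN f n) ⁻¹' A) :=
        lt_of_lt_of_le (show (1 : ℝ≥0∞) < 3/4 + 1/3 by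
          have h0 : (3/4:ℝ≥0∞) + 1/4 = 1 := by
            rw [ENNReal.div_add_div_same, show (3:ℝ≥0∞)+1 = 4 by norm_num,
              ENNReal.div_self (by norm_num) (by norm_num)]
          have hx : (1/4:ℝ≥0∞) < 1/3 := by
            rw [one_div, one_div, ENNReal.inv_lt_inv]; norm_num
          calc (1:ℝ≥0∞) = 3/4 + 1/4 := h0.symm
            _ < 3/4 + 1/3 := ENNReal.add_lt_add_left
                ((ENNReal.div_lt_top (by norm_num) (by norm_num)).ne) hx)
          (add_le_add hμU.le hlt.le)
      rw [← heq] at h2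
      exact absurd h1 (not_le.mpr h2)
    obtain ⟨x, hxU, hxA⟩ := nonempty_of_measure_ne_zero hne
    exact ⟨iterN f n x, ⟨x, hxU, rfl⟩, hxA⟩
  exact ⟨n, hn, key hV hρ𝒱.1, key hW hρ𝒱.2⟩
end

section
/- If the induced non-autonomous system on the space of Borel probability measures M(X) is topologically transitive, then the base non-autonomous system (X, f_{1,∞}) is topologically transitive. -/
open Set Filter MeasureTheory TopologicalSpace

/-! For open `G`, the set of probability measures giving `G` mass more than `1/2` is weak* open
(portmanteau) and contains the Dirac masses at points of `G`. Transitivity of the induced system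
yields `μ` and `n` with `μ U > 1/2` and `μ ((f_1^n)⁻¹ V) > 1/2`, so `U` meets `(f_1^n)⁻¹ V`. -/

lemma ProbabilityMeasure.lowerSemicontinuous_toMeasure_apply {Ω : Type*} [MeasurableSpace Ω]
    [TopologicalSpace Ω] [OpensMeasurableSpace Ω] [HasOuterApproxClosed Ω] {G : Set Ω}
    (hG : IsOpen G) : LowerSemicontinuous fun μ : ProbabilityMeasure Ω ↦ (μ : Measure Ω) G :=
  lowerSemicontinuous_iff_le_liminf.2 fun _ ↦
    ProbabilityMeasure.le_liminf_measure_open_of_tendsto tendsto_id hG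

lemma nonempty_inter_of_inv_two_lt_measure {Ω : Type*} [MeasurableSpace Ω] {μ : Measure Ω}
    [IsProbabilityMeasure μ] {s t : Set Ω} (ht : MeasurableSet t) (hs : 2⁻¹ < μ s)
    (ht' : 2⁻¹ < μ t) : (s ∩ t).Nonempty :=
  nonempty_inter_of_measure_lt_add μ ht (subset_univ s) (subset_univ t) <| by
    calc μ univ = 2⁻¹ + 2⁻¹ := by simp [ENNReal.inv_two_add_inv_two]
      _ < μ s + μ t := ENNReal.add_lt_add hs ht'

section

variable {X : Type*} [TopologicalSpace X]

lemma continuous_iterN {f : ℕ → X → X} (hf : ∀ n, Continuous (f n)) (n : ℕ) :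
    Continuous (iterN f n) := by
  induction n with
  | zero => exact continuous_id
  | succ k ih => exact (hf k).comp ih

variable [MeasurableSpace X] [BorelSpace X]

lemma toMeasure_iterN_inducedM {f : ℕ → X → X} (hf : ∀ n, Continuous (f n)) (n : ℕ)
    (μ : ProbabilityMeasure X) :
    ((iterN (inducedM f hf) n μ : ProbabilityMeasure X) : Measure X)
      = (μ : Measure X).map (iterN f n) := by
  induction n with
  | zero => simp [iterN]
  | succ k ih =>
    rw [iterN, Function.comp_apply, inducedM, ProbabilityMeasure.toMeasure_map, ih,
      Measure.map_map (hf k).measurable (continuous_iterN hf k).measurable, iterN]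

end

theorem measure_transitive_implies_transitive_general {X : Type*} [MetricSpace X]
    [MeasurableSpace X] [BorelSpace X] (f : ℕ → X → X) (hf : ∀ n, Continuous (f n))
    (h : NATransitive (inducedM f hf)) : NATransitive f := by
  intro U V hU hV ⟨x, hx⟩ ⟨y, hy⟩
  obtain ⟨n, hn, _, ⟨μ, hμU, rfl⟩, hμV⟩ := h _ _
    ((ProbabilityMeasure.lowerSemicontinuous_toMeasure_apply hU).isOpen_preimage 2⁻¹)
    ((ProbabilityMeasure.lowerSemicontinuous_toMeasure_apply hV).isOpen_preimage 2⁻¹)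
    ⟨diracProba x, by simp [hx]⟩ ⟨diracProba y, by simp [hy]⟩
  have hV' : MeasurableSet (iterN f n ⁻¹' V) :=
    (continuous_iterN hf n).measurable hV.measurableSet
  rw [mem_preimage, mem_Ioi, toMeasure_iterN_inducedM,
    Measure.map_apply (continuous_iterN hf n).measurable hV.measurableSet] at hμV
  obtain ⟨z, hzU, hzV⟩ := nonempty_inter_of_inv_two_lt_measure hV' hμU hμV
  exact ⟨n, hn, iterN f n z, mem_image_of_mem _ hzU, hzV⟩

/-- transitivity of the induced system on probability measures implies
transitivity of the base non-autonomous system. -/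
theorem measure_transitive_implies_transitive {X : Type*} [MetricSpace X] [CompactSpace X]
    [MeasurableSpace X] [BorelSpace X] (f : ℕ → X → X) (hf : ∀ n, Continuous (f n))
    (h : NATransitive (inducedM f hf)) : NATransitive f :=
  measure_transitive_implies_transitive_general f hf h
end

section
/- If (X, f_{1,∞}) is a non-autonomous system on an infinite metric space in which each f_i is an isometry, then (X, f_{1,∞}) is not weakly mixing. -/
open Set Filter MeasureTheory TopologicalSpace

open Metric

theorem isometry_iterN {X : Type*} [PseudoEMetricSpace X] {f : ℕ → X → X}
    (hf : ∀ n, Isometry (f n)) (n : ℕ) : Isometry (iterN f n) := by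
  induction n with
  | zero => exact isometry_id
  | succ k ih => exact (hf k).comp ih

theorem NAWeaklyMixing.nABanks {X : Type*} [TopologicalSpace X] {f : ℕ → X → X}
    (h : NAWeaklyMixing f) : NABanks f :=
  fun U V W hU hV hW hUne hVne hWne => h U U V W hU hU hV hW hUne hUne hVne hWne

theorem Isometry.dist_lt_of_image_ball_inter_nonempty {X Y : Type*} [PseudoMetricSpace X]
    [PseudoMetricSpace Y] {g : X → Y} (hg : Isometry g) {c : X} {a b : Y} {r : ℝ}
    (ha : (g '' ball c r ∩ ball a r).Nonempty) (hb : (g '' ball c r ∩ ball b r).Nonempty) :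
    dist a b < 4 * r := by
  obtain ⟨_, ⟨x, hxc, rfl⟩, hxa⟩ := ha
  obtain ⟨_, ⟨y, hyc, rfl⟩, hyb⟩ := hb
  rw [mem_ball] at hxc hyc hxa hyb
  have hxy : dist x y < 2 * r := by linarith [dist_triangle_right x y c]
  calc dist a b ≤ dist (g x) a + dist (g x) (g y) + dist (g y) b := by
        linarith [dist_triangle4 a (g x) (g y) b, dist_comm a (g x)]
    _ = dist (g x) a + dist x y + dist (g y) b := by rw [hg.dist_eq]
    _ < 4 * r := by linarith

theorem not_nABanks_of_isometry {X : Type*} [MetricSpace X] [Nontrivial X] {f : ℕ → X → X}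
    (hf : ∀ n, Isometry (f n)) : ¬ NABanks f := by
  intro h
  obtain ⟨a, b, hab⟩ := exists_pair_ne X
  have hr : 0 < dist a b / 4 := div_pos (dist_pos.2 hab) four_pos
  obtain ⟨n, -, ha, hb⟩ := h (ball a _) (ball a _) (ball b _) isOpen_ball isOpen_ball
    isOpen_ball (nonempty_ball.2 hr) (nonempty_ball.2 hr) (nonempty_ball.2 hr)
  have := (isometry_iterN hf n).dist_lt_of_image_ball_inter_nonempty ha hb
  linarith

/-- a non-autonomous system of isometries on an infinite metric space
is not weakly mixing. -/
theorem isometries_not_weaklyMixing {X : Type*} [MetricSpace X] [Infinite X]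
    (f : ℕ → X → X) (hiso : ∀ n, Isometry (f n)) : ¬ NAWeaklyMixing f :=
  fun h => not_nABanks_of_isometry hiso h.nABanks
end
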